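/- Let h : [0,∞) → [0,∞) be nondecreasing and right-continuous, K' > 0, define g(x) = x h(x) - ∫_0^x h(s) ds, suppose {x : g(x) ≥ K'} is nonempty, and set x* = inf{x : g(x) ≥ K'}. Then the cost function C(x) = (K' + ∫_0^x h(s) ds)/x, defined for x > 0, is strictly decreasing on (0, x*), nondecreasing on (x*, ∞), and attains its minimum over (0,∞) at x = x*. -/
import Mathlib


open Set MeasureTheory

/-- Let `h : [0,∞) → [0,∞)` be nondecreasing and
right-continuous, `K' > 0`, `g x = x h x - ∫_0^x h`, suppose
`{x ≥ 0 | g x ≥ K'}` is nonempty and `x* = inf {x ≥ 0 | g x ≥ K'}`. Then the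
cost `C x = (K' + ∫_0^x h)/x` is strictly decreasing on `(0, x*)`,
nondecreasing on `(x*, ∞)`, and attains its minimum over `(0,∞)` at `x*`. -/
theorem stmt16
    (h : ℝ → ℝ) (hmono : MonotoneOn h (Set.Ici 0))
    (hrc : ∀ t : ℝ, 0 ≤ t → ContinuousWithinAt h (Set.Ici t) t)
    (hnn : ∀ t : ℝ, 0 ≤ t → 0 ≤ h t)
    (K' : ℝ) (hK' : 0 < K')
    (g : ℝ → ℝ) (hg : ∀ x, g x = x * h x - ∫ s in (0:ℝ)..x, h s)
    (hne : ∃ x : ℝ, 0 ≤ x ∧ K' ≤ g x)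
    (xstar : ℝ) (hxstar : xstar = sInf {x : ℝ | 0 ≤ x ∧ K' ≤ g x})
    (C : ℝ → ℝ) (hC : ∀ x, C x = (K' + ∫ s in (0:ℝ)..x, h s) / x) :
    StrictAntiOn C (Set.Ioo 0 xstar) ∧
    MonotoneOn C (Set.Ioi xstar) ∧
    (∀ x : ℝ, 0 < x → C xstar ≤ C x) := by
  -- integrability
  have hint : ∀ a b : ℝ, 0 ≤ a → 0 ≤ b → IntervalIntegrable h volume a b := by
    intro a b ha hb
    apply MonotoneOn.intervalIntegrable
    apply hmono.mono
    intro t ht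
    exact le_trans (le_min ha hb) ht.1
  -- upper and lower bounds for the integral over [a,b]
  have hub : ∀ a b : ℝ, 0 ≤ a → a ≤ b → (∫ s in a..b, h s) ≤ (b - a) * h b := by
    intro a b ha hab
    have hb : (0:ℝ) ≤ b := ha.trans hab
    calc (∫ s in a..b, h s) ≤ ∫ _ in a..b, h b :=
          intervalIntegral.integral_mono_on hab (hint a b ha hb) intervalIntegrable_const
            (fun x hx => hmono (ha.trans hx.1) hb hx.2)
      _ = (b - a) * h b := by simp [intervalIntegral.integral_const, smul_eq_mul]
  have hlb : ∀ a b : ℝ, 0 ≤ a → a ≤ b → (b - a) * h a ≤ ∫ s in a..b, h s := by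
    intro a b ha hab
    have hb : (0:ℝ) ≤ b := ha.trans hab
    calc (b - a) * h a = ∫ _ in a..b, h a := by
          simp [intervalIntegral.integral_const, smul_eq_mul]
      _ ≤ ∫ s in a..b, h s :=
          intervalIntegral.integral_mono_on hab intervalIntegrable_const (hint a b ha hb)
            (fun x hx => hmono ha (ha.trans hx.1) hx.1)
  have hF0 : ∀ x : ℝ, 0 ≤ x → 0 ≤ ∫ s in (0:ℝ)..x, h s := fun x hx =>
    intervalIntegral.integral_nonneg hx (fun u hu => hnn u hu.1)
  have hsplit : ∀ a b : ℝ, 0 ≤ a → a ≤ b →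
      (∫ s in (0:ℝ)..b, h s) = (∫ s in (0:ℝ)..a, h s) + ∫ s in a..b, h s := by
    intro a b ha hab
    rw [← intervalIntegral.integral_add_adjacent_intervals (hint 0 a le_rfl ha)
      (hint a b ha (ha.trans hab))]
  have hbdd : BddBelow {x : ℝ | 0 ≤ x ∧ K' ≤ g x} := ⟨0, fun y hy => hy.1⟩
  have hne' : {x : ℝ | 0 ≤ x ∧ K' ≤ g x}.Nonempty := by
    obtain ⟨x, hx1, hx2⟩ := hne; exact ⟨x, hx1, hx2⟩
  have hx0 : 0 ≤ xstar := hxstar ▸ le_csInf hne' (fun y hy => hy.1)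
  -- x* > 0
  have hxpos : 0 < xstar := by
    have h1nn : (0:ℝ) ≤ h 1 := hnn 1 zero_le_one
    have hlow : ∀ y ∈ {x : ℝ | 0 ≤ x ∧ K' ≤ g x}, min 1 (K' / (h 1 + 1)) ≤ y := by
      rintro y ⟨hy0, hyK⟩
      rcases le_or_gt 1 y with hy1 | hy1
      · exact le_trans (min_le_left _ _) hy1
      · refine le_trans (min_le_right _ _) ?_
        rw [div_le_iff₀ (by linarith)]
        have hFy : 0 ≤ ∫ s in (0:ℝ)..y, h s := hF0 y hy0
        have : g y ≤ y * h y := by rw [hg]; linarith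
        have hhy : h y ≤ h 1 := hmono hy0 (Set.mem_Ici.mpr zero_le_one) hy1.le
        nlinarith [hnn y hy0]
    have : min 1 (K' / (h 1 + 1)) ≤ xstar := hxstar ▸ le_csInf hne' hlow
    have hpos : 0 < min 1 (K' / (h 1 + 1)) :=
      lt_min one_pos (div_pos hK' (by linarith))
    linarith
  -- g is ≥ K' strictly above x*, < K' below x*
  have hgx : ∀ x, xstar < x → K' ≤ g x := by
    intro x hx
    obtain ⟨y, hyS, hyx⟩ := (csInf_lt_iff hbdd hne').mp (hxstar ▸ hx)
    have hy0 : 0 ≤ y := hyS.1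
    have hx0' : 0 ≤ x := hy0.trans hyx.le
    have hI : (∫ s in y..x, h s) ≤ (x - y) * h x := hub y x hy0 hyx.le
    have hsp := hsplit y x hy0 hyx.le
    have hhy : h y ≤ h x := hmono hy0 hx0' hyx.le
    have := hyS.2
    rw [hg] at this ⊢
    nlinarith
  have hglt : ∀ x, 0 ≤ x → x < xstar → g x < K' := by
    intro x hx0' hx
    by_contra hcon
    push_neg at hcon
    have : xstar ≤ x := hxstar ▸ csInf_le hbdd ⟨hx0', hcon⟩
    linarith
  -- key difference estimates
  have key1 : ∀ a b : ℝ, 0 < a → a ≤ b → K' ≤ g a → C a ≤ C b := by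
    intro a b ha hab hga
    have hb : 0 < b := ha.trans_le hab
    rw [hC a, hC b, div_le_div_iff₀ ha hb]
    have hsp := hsplit a b ha.le hab
    have hI : (b - a) * h a ≤ ∫ s in a..b, h s := hlb a b ha.le hab
    rw [hg] at hga
    have hha : 0 ≤ h a := hnn a ha.le
    nlinarith [mul_le_mul_of_nonneg_left hI ha.le,
      mul_le_mul_of_nonneg_right (show K' + (∫ s in (0:ℝ)..a, h s) ≤ a * h a by linarith)
        (sub_nonneg.2 hab)]
  have key2 : ∀ a b : ℝ, 0 < a → a < b → g b < K' → C b < C a := by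
    intro a b ha hab hgb
    have hb : 0 < b := ha.trans hab
    rw [hC a, hC b, div_lt_div_iff₀ hb ha]
    have hsp := hsplit a b ha.le hab.le
    have hI : (∫ s in a..b, h s) ≤ (b - a) * h b := hub a b ha.le hab.le
    rw [hg] at hgb
    have h2 : a * h b < K' + ∫ s in (0:ℝ)..a, h s := by nlinarith
    have h3 : (b - a) * (a * h b) < (b - a) * (K' + ∫ s in (0:ℝ)..a, h s) :=
      mul_lt_mul_of_pos_left h2 (sub_pos.2 hab)
    nlinarith [mul_le_mul_of_nonneg_left hI ha.le]
  -- the three conclusions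
  refine ⟨?_, ?_, ?_⟩
  · intro a ha b hb hab
    exact key2 a b ha.1 hab (hglt b (ha.1.trans hab).le hb.2)
  · intro a ha b hb hab
    rcases eq_or_lt_of_le hab with rfl | hab'
    · exact le_rfl
    · exact key1 a b (hx0.trans_lt ha) hab (hgx a ha)
  · intro x hx
    rcases lt_trichotomy x xstar with hlt | heq | hgt
    · -- x < xstar : approach xstar from the left
      have hcont : ContinuousWithinAt (fun b => ∫ s in (0:ℝ)..b, h s) (Icc 0 xstar) xstar := by
        have hIO : IntegrableOn h (uIcc 0 xstar) volume :=
          (hmono.mono (by rw [uIcc_of_le hx0]; exact fun t ht => ht.1)).integrableOn_isCompact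
            isCompact_uIcc
        have := intervalIntegral.continuousOn_primitive_interval hIO
        rw [uIcc_of_le hx0] at this
        exact this xstar (right_mem_Icc.2 hx0)
      have hc2 : ContinuousWithinAt (fun b => (K' + ∫ s in (0:ℝ)..b, h s) / b)
          (Ico x xstar) xstar := by
        refine ContinuousWithinAt.div
          (continuousWithinAt_const.add (hcont.mono ?_)) continuousWithinAt_id hxpos.ne'
        exact fun t ht => ⟨hx.le.trans ht.1, ht.2.le⟩
      have hCt : Filter.Tendsto C (nhdsWithin xstar (Ico x xstar)) (nhds (C xstar)) := by
        rw [hC xstar]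
        exact hc2.tendsto.congr (fun b => (hC b).symm)
      have hev : ∀ b ∈ Ico x xstar, C b ≤ C x := by
        rintro b ⟨hb1, hb2⟩
        rcases eq_or_lt_of_le hb1 with rfl | hb1'
        · exact le_rfl
        · exact (key2 x b hx hb1' (hglt b (hx.trans hb1').le hb2)).le
      have : Filter.NeBot (nhdsWithin xstar (Ico x xstar)) := right_nhdsWithin_Ico_neBot hlt
      exact le_of_tendsto hCt ((Filter.eventually_iff_exists_mem).2
        ⟨_, self_mem_nhdsWithin, hev⟩)
    · rw [heq]
    · -- xstar < x : approach xstar from the right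
      have hcont : ContinuousWithinAt (fun b => ∫ s in (0:ℝ)..b, h s) (Icc 0 x) xstar := by
        have hIO : IntegrableOn h (uIcc 0 x) volume :=
          (hmono.mono (by rw [uIcc_of_le hx.le]; exact fun t ht => ht.1)).integrableOn_isCompact
            isCompact_uIcc
        have := intervalIntegral.continuousOn_primitive_interval hIO
        rw [uIcc_of_le hx.le] at this
        exact this xstar ⟨hx0, hgt.le⟩
      have hc2 : ContinuousWithinAt (fun b => (K' + ∫ s in (0:ℝ)..b, h s) / b)
          (Ioc xstar x) xstar := by
        refine ContinuousWithinAt.div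
          (continuousWithinAt_const.add (hcont.mono ?_)) continuousWithinAt_id hxpos.ne'
        exact fun t ht => ⟨hx0.trans ht.1.le, ht.2⟩
      have hCt : Filter.Tendsto C (nhdsWithin xstar (Ioc xstar x)) (nhds (C xstar)) := by
        rw [hC xstar]
        exact hc2.tendsto.congr (fun b => (hC b).symm)
      have hev : ∀ b ∈ Ioc xstar x, C b ≤ C x := by
        rintro b ⟨hb1, hb2⟩
        exact key1 b x (hxpos.trans hb1) hb2 (hgx b hb1)
      have : Filter.NeBot (nhdsWithin xstar (Ioc xstar x)) := left_nhdsWithin_Ioc_neBot hgt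
      exact le_of_tendsto hCt ((Filter.eventually_iff_exists_mem).2
        ⟨_, self_mem_nhdsWithin, hev⟩)
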